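/- (Exact reachability) Assume ρ_{f,0} is a strictly positive differentiable probability density on S¹ with ∂_θ log ρ_{f,0}(θ) = Σ_k p_k e^{ikθ}, and let Z(θ) = Σ_k z_k e^{ikθ} with the property that z_k ≠ 0 whenever p_k ≠ 0. Define v_k = B² p_{-k}/z_{-k} when k ≠ 0 and z_{-k} ≠ 0, and v_k = 0 otherwise, set Γ(θ) = Σ_k z_k v_{-k} e^{ikθ}, V(θ) = −∫₀^θ Γ, and ρ_st(θ) = exp(−V(θ)/B²)/∫_{S¹} exp(−V/B²). Then ρ_st = ρ_{f,0} on S¹. -/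

import Mathlib

open Real MeasureTheory intervalIntegral

/-- Exact reachability: if the nonzero Fourier coefficients of `∂_θ log ρ_{f,0}` are
covered by those of `Z`, then the periodic input with coefficients
`v_k = B² p_{-k} / z_{-k}` makes the Gibbs stationary density equal to the target. -/
theorem stmt_7 (ρf : ℝ → ℝ) (B : ℝ) (hB : 0 < B)
    (hfC : ContDiff ℝ 1 ρf) (hfper : Function.Periodic ρf (2 * π))
    (hfpos : ∀ θ, 0 < ρf θ)
    (hfint : (∫ θ in (0:ℝ)..(2 * π), ρf θ) = 1)
    (p z : ℤ → ℂ)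
    (hp : Summable (fun k : ℤ => ‖p k‖)) (hz : Summable (fun k : ℤ => ‖z k‖))
    (hpf : ∀ θ : ℝ, ((deriv (fun x => Real.log (ρf x)) θ : ℝ) : ℂ)
        = ∑' k : ℤ, p k * Complex.exp (Complex.I * k * θ))
    (hcover : ∀ k : ℤ, p k ≠ 0 → z k ≠ 0)
    (v : ℤ → ℂ)
    (hv : ∀ k : ℤ, v k = if k ≠ 0 ∧ z (-k) ≠ 0 then (B:ℂ) ^ 2 * p (-k) / z (-k) else 0)
    (Γ : ℝ → ℂ)
    (hΓ : ∀ θ : ℝ, Γ θ = ∑' k : ℤ, z k * v (-k) * Complex.exp (Complex.I * k * θ))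
    (V : ℝ → ℝ)
    (hV : ∀ θ : ℝ, V θ = (-∫ φ in (0:ℝ)..θ, Γ φ).re)
    (ρst : ℝ → ℝ)
    (hρst : ∀ θ : ℝ, ρst θ =
      Real.exp (-V θ / B ^ 2) / ∫ ψ in (0:ℝ)..(2 * π), Real.exp (-V ψ / B ^ 2)) :
    ∀ θ : ℝ, ρst θ = ρf θ := by
  have hπ : (0:ℝ) < 2 * π := by positivity
  set g : ℝ → ℝ := fun θ => deriv ρf θ / ρf θ with hgdef
  have hlogd : ∀ θ, HasDerivAt (fun x => Real.log (ρf x)) (g θ) θ := fun θ =>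
    ((hfC.differentiable one_ne_zero θ).hasDerivAt).log (hfpos θ).ne'
  have hderiv_eq : ∀ θ, deriv (fun x => Real.log (ρf x)) θ = g θ := fun θ => (hlogd θ).deriv
  have hgcont : Continuous g :=
    (hfC.continuous_deriv le_rfl).div hfC.continuous fun θ => (hfpos θ).ne'
  have hgint : ∀ a b : ℝ, IntervalIntegrable g volume a b := fun a b =>
    hgcont.intervalIntegrable a b
  have hFTC : ∀ θ : ℝ, (∫ φ in (0:ℝ)..θ, g φ) = Real.log (ρf θ) - Real.log (ρf 0) :=
    fun θ => integral_eq_sub_of_hasDerivAt (fun x _ => hlogd x) (hgint 0 θ)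
  have hcontk : ∀ k : ℤ, Continuous fun θ : ℝ => p k * Complex.exp (Complex.I * k * θ) := by
    intro k
    exact continuous_const.mul (Complex.continuous_exp.comp
      (continuous_const.mul Complex.continuous_ofReal))
  have hnorm : ∀ (k : ℤ) (θ : ℝ), ‖p k * Complex.exp (Complex.I * k * θ)‖ = ‖p k‖ := by
    intro k θ
    rw [norm_mul, Complex.norm_exp]
    simp [Complex.mul_re]
  -- termwise integrals
  have hterm : ∀ k : ℤ, k ≠ 0 →
      (∫ θ in (0:ℝ)..(2 * π), p k * Complex.exp (Complex.I * k * θ)) = 0 := by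
    intro k hk
    have hc : (Complex.I * k : ℂ) ≠ 0 := by
      simp [Complex.I_ne_zero, Complex.ext_iff, hk]
    rw [intervalIntegral.integral_const_mul, integral_exp_mul_complex hc]
    have h1 : (Complex.I * k * ((2 * π : ℝ) : ℂ)) = (k : ℂ) * (2 * π * Complex.I) := by
      push_cast; ring
    rw [h1, Complex.exp_int_mul_two_pi_mul_I]
    simp
  have hterm0 : (∫ θ in (0:ℝ)..(2 * π), p 0 * Complex.exp (Complex.I * (0:ℤ) * θ))
      = (2 * π : ℝ) * p 0 := by
    simp [Complex.ofReal_mul]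
  -- p 0 = 0
  have hp0 : p 0 = 0 := by
    have hInt : ∀ k : ℤ, Integrable (fun θ : ℝ => p k * Complex.exp (Complex.I * k * θ))
        (volume.restrict (Set.Ioc (0:ℝ) (2 * π))) := fun k => (hcontk k).integrableOn_Ioc
    have hSum : Summable fun k : ℤ =>
        ∫ θ : ℝ in Set.Ioc (0:ℝ) (2 * π), ‖p k * Complex.exp (Complex.I * k * θ)‖ := by
      have heq : ∀ k : ℤ, (∫ θ : ℝ in Set.Ioc (0:ℝ) (2 * π),
          ‖p k * Complex.exp (Complex.I * k * θ)‖) = (2 * π) * ‖p k‖ := by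
        intro k
        simp_rw [hnorm k]
        rw [setIntegral_const]
        simp [Real.volume_Ioc, ENNReal.toReal_ofReal hπ.le, Real.pi_pos.le]
      exact (hp.mul_left (2 * π)).congr fun k => (heq k).symm
    have hswap := MeasureTheory.integral_tsum_of_summable_integral_norm hInt hSum
    have hL : (∫ θ : ℝ in Set.Ioc (0:ℝ) (2 * π),
        ∑' k : ℤ, p k * Complex.exp (Complex.I * k * θ)) = 0 := by
      rw [← intervalIntegral.integral_of_le hπ.le]
      have h2 : (∫ θ in (0:ℝ)..(2 * π), ∑' k : ℤ, p k * Complex.exp (Complex.I * k * θ))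
          = ∫ θ in (0:ℝ)..(2 * π), ((g θ : ℝ) : ℂ) := by
        refine intervalIntegral.integral_congr fun θ _ => ?_
        rw [← hpf θ, hderiv_eq θ]
      rw [h2, intervalIntegral.integral_ofReal, hFTC (2 * π)]
      have h3 : ρf (2 * π) = ρf 0 := by simpa using hfper 0
      simp [h3]
    have hR : (∑' k : ℤ, ∫ θ : ℝ in Set.Ioc (0:ℝ) (2 * π),
        p k * Complex.exp (Complex.I * k * θ)) = (2 * π : ℝ) * p 0 := by
      rw [tsum_eq_single 0]
      · rw [← intervalIntegral.integral_of_le hπ.le]; exact hterm0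
      · intro k hk
        rw [← intervalIntegral.integral_of_le hπ.le]; exact hterm k hk
    rw [hR, hL] at hswap
    have h2π : ((2 * π : ℝ) : ℂ) ≠ 0 := by
      simp [Real.pi_ne_zero]
    exact (mul_eq_zero.mp hswap).resolve_left h2π
  -- coefficient identity
  have hcoef : ∀ k : ℤ, z k * v (-k) = (B : ℂ) ^ 2 * p k := by
    intro k
    rw [hv (-k)]
    by_cases hk : k = 0
    · subst hk; simp [hp0]
    · by_cases hzk : z k = 0
      · have hpk : p k = 0 := by
          by_contra h; exact hcover k h hzk
        simp [hzk, hpk]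
      · rw [if_pos ⟨neg_ne_zero.mpr hk, by rwa [neg_neg]⟩]
        rw [neg_neg]
        field_simp
  -- Γ in closed form
  have hΓeq : ∀ θ : ℝ, Γ θ = (B : ℂ) ^ 2 * ((g θ : ℝ) : ℂ) := by
    intro θ
    rw [hΓ θ]
    have h1 : ∀ k : ℤ, z k * v (-k) * Complex.exp (Complex.I * k * θ)
        = (B : ℂ) ^ 2 * (p k * Complex.exp (Complex.I * k * θ)) := by
      intro k; rw [hcoef k]; ring
    rw [tsum_congr h1, tsum_mul_left, ← hpf θ, hderiv_eq θ]
  -- V in closed form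
  have hVeq : ∀ θ : ℝ, V θ = -(B ^ 2 * (Real.log (ρf θ) - Real.log (ρf 0))) := by
    intro θ
    rw [hV θ]
    have h1 : (∫ φ in (0:ℝ)..θ, Γ φ)
        = ((B ^ 2 * (Real.log (ρf θ) - Real.log (ρf 0)) : ℝ) : ℂ) := by
      have h2 : (∫ φ in (0:ℝ)..θ, Γ φ) = ∫ φ in (0:ℝ)..θ, (B : ℂ) ^ 2 * ((g φ : ℝ) : ℂ) :=
        intervalIntegral.integral_congr fun φ _ => hΓeq φ
      rw [h2, intervalIntegral.integral_const_mul, intervalIntegral.integral_ofReal, hFTC θ]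
      push_cast
      ring
    rw [h1, ← Complex.ofReal_neg, Complex.ofReal_re]
  -- exponential form
  have hexp : ∀ θ : ℝ, Real.exp (-V θ / B ^ 2) = ρf θ / ρf 0 := by
    intro θ
    have hB2 : (B : ℝ) ^ 2 ≠ 0 := by positivity
    rw [hVeq θ]
    have h1 : -(-(B ^ 2 * (Real.log (ρf θ) - Real.log (ρf 0)))) / B ^ 2
        = Real.log (ρf θ) - Real.log (ρf 0) := by
      field_simp
    rw [h1, Real.exp_sub, Real.exp_log (hfpos θ), Real.exp_log (hfpos 0)]
  -- normalization
  have hnormint : (∫ ψ in (0:ℝ)..(2 * π), Real.exp (-V ψ / B ^ 2)) = 1 / ρf 0 := by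
    have h1 : (∫ ψ in (0:ℝ)..(2 * π), Real.exp (-V ψ / B ^ 2))
        = ∫ ψ in (0:ℝ)..(2 * π), ρf ψ / ρf 0 :=
      intervalIntegral.integral_congr fun ψ _ => hexp ψ
    rw [h1, intervalIntegral.integral_div, hfint]
  intro θ
  rw [hρst θ, hexp θ, hnormint]
  field_simp
  rw [mul_div_assoc, div_self (hfpos 0).ne', mul_one]
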